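/- arXiv:0906.1166 — 6 statements merged into one kernel-verified Lean document; each statement's English description precedes it below -/
import Mathlib

section
/- Let N be a rooted DAG with root r, and let u -> ... -> v be a tree path. Then v is a strict descendant of u, i.e., every directed path from r to v contains u. -/
/-- A walk in a directed graph `E` given by its (nonempty) list of vertices,
from `u` to `v`. -/
def IsWalk {V : Type*} (E : V → V → Prop) (l : List V) (u v : V) : Prop :=
  l.Chain' E ∧ l.head? = some u ∧ l.getLast? = some v

/-- In-degree of a node. -/
noncomputable def inDeg {V : Type*} [Fintype V] (E : V → V → Prop) (v : V) : ℕ :=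
  Nat.card {u // E u v}

/-- Out-degree of a node. -/
noncomputable def outDeg {V : Type*} [Fintype V] (E : V → V → Prop) (v : V) : ℕ :=
  Nat.card {w // E v w}

/-- The cluster of a node: the set of leaves (out-degree 0 nodes) that are
descendants of it. -/
noncomputable def cluster {V : Type*} [Fintype V] (E : V → V → Prop) (v : V) : Set V :=
  {l | outDeg E l = 0 ∧ Relation.ReflTransGen E v l}

/-- The intermediate (internal) nodes of a walk. -/
def internals {V : Type*} (l : List V) : List V := l.tail.dropLast

/-- The arcs of a walk. -/
def arcsOf {V : Type*} (l : List V) : List (V × V) := l.zip l.tail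

/-- A reticulation cycle with split node `x` and hybrid end `h`, consisting of the
two internally disjoint merge paths `p` and `q`. -/
def RetCycleAt {V : Type*} (E : V → V → Prop) (x h : V) (p q : List V) : Prop :=
  IsWalk E p x h ∧ IsWalk E q x h ∧ p ≠ q ∧ ∀ y ∈ internals p, y ∉ internals q

/-- A network is 1-nested when every pair of distinct reticulation cycles (for hybrid
nodes) have disjoint sets of arcs. -/
noncomputable def OneNested {V : Type*} [Fintype V] (E : V → V → Prop) : Prop :=
  ∀ x h p q x' h' p' q', 2 ≤ inDeg E h → 2 ≤ inDeg E h' →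
    RetCycleAt E x h p q → RetCycleAt E x' h' p' q' →
    ¬ (x = x' ∧ h = h' ∧ ({p, q} : Set (List V)) = {p', q'}) →
    ∀ a ∈ arcsOf p ++ arcsOf q, a ∉ arcsOf p' ++ arcsOf q'

/-!
Walk backwards from `v` along the tree path. Each of its nodes after `u` has at most one
in-neighbour, so a walk from `r` to `v` has to enter `v` from the predecessor of `v` on the tree
path, and by induction it passes through `u`. It cannot stop early at `r = v`: then
`r →* u →+ v = r` would be a cycle through `r`.
-/

theorem eq_of_inDeg_le_one {V : Type*} [Fintype V] {E : V → V → Prop} {a b v : V}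
    (hv : inDeg E v ≤ 1) (ha : E a v) (hb : E b v) : a = b := by
  have : Subsingleton {x // E x v} := Finite.card_le_one_iff_subsingleton.1 hv
  exact congrArg Subtype.val (Subsingleton.elim (⟨a, ha⟩ : {x // E x v}) ⟨b, hb⟩)

namespace IsWalk

variable {V : Type*} {E : V → V → Prop} {l : List V} {u v : V}

theorem isChain (h : IsWalk E l u v) : l.IsChain E := h.1

theorem ne_nil (h : IsWalk E l u v) : l ≠ [] := by
  rintro rfl
  cases h.2.1

theorem getLast_mem (h : IsWalk E l u v) : v ∈ l :=
  List.mem_of_getLast? h.2.2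

theorem reflTransGen (h : IsWalk E l u v) : Relation.ReflTransGen E u v := by
  obtain ⟨l, rfl⟩ := List.head?_eq_some_iff.1 h.2.1
  exact List.relationReflTransGen_of_exists_isChain_cons l h.isChain
    (Option.some_injective _ (by rw [← List.getLast?_eq_some_getLast, h.2.2]))

theorem eq_singleton_or_exists_snoc (h : IsWalk E l u v) :
    (l = [v] ∧ u = v) ∨ ∃ l' w, l = l' ++ [v] ∧ IsWalk E l' u w ∧ E w v := by
  obtain ⟨l', rfl⟩ := List.getLast?_eq_some_iff.1 h.2.2
  rcases List.eq_nil_or_concat l' with rfl | ⟨l'', w, rfl⟩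
  · left
    simpa [eq_comm] using h.2.1
  · right
    have hchain := List.isChain_append.1 h.isChain
    have hhead := h.2.1
    rw [List.head?_append_of_ne_nil _ (by simp)] at hhead
    exact ⟨l''.concat w, w, rfl, ⟨hchain.1, hhead, by simp⟩, hchain.2.2 w (by simp) v rfl⟩

end IsWalk

theorem IsWalk.mem_of_isWalk_of_inDeg_le_one {V : Type*} [Fintype V] {E : V → V → Prop}
    {r u v : V} {l p : List V}
    (hl : IsWalk E l r v) (hp : IsWalk E p u v) (htree : ∀ x ∈ p.tail, inDeg E x ≤ 1)
    (hru : Relation.ReflTransGen E r u) (hr : ¬ Relation.TransGen E r r) : u ∈ l := by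
  rcases hp.eq_singleton_or_exists_snoc with ⟨-, rfl⟩ | ⟨p', w, rfl, hp', hwv⟩
  · exact hl.getLast_mem
  rcases hl.eq_singleton_or_exists_snoc with ⟨-, rfl⟩ | ⟨l', y, rfl, hl', hyv⟩
  · exact absurd (.tail' (hru.trans hp'.reflTransGen) hwv) hr
  rw [List.tail_append_of_ne_nil hp'.ne_nil] at htree
  obtain rfl : y = w := eq_of_inDeg_le_one (htree v (by simp)) hyv hwv
  exact List.mem_append_left _ <| hl'.mem_of_isWalk_of_inDeg_le_one hp'
    (fun x hx => htree x (List.mem_append_left _ hx)) hru hr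
termination_by p.length

/-- If there is a tree path from `u` to `v` in a rooted DAG with root `r`, then
`v` is a strict descendant of `u`: every directed path from `r` to `v`
contains `u`. -/
theorem stmt3 {V : Type*} [Fintype V] (E : V → V → Prop) (r : V)
    (hacyc : ∀ v, ¬ Relation.TransGen E v v)
    (hroot : ∀ v, Relation.ReflTransGen E r v)
    (u v : V) (p : List V) (hp : IsWalk E p u v)
    (htree : ∀ x ∈ p.tail, inDeg E x ≤ 1) :
    ∀ l : List V, IsWalk E l r v → u ∈ l :=
  fun _ hl => hl.mem_of_isWalk_of_inDeg_le_one hp htree (hroot u) (hacyc r)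
end

section
/- Let N be a tree-child rooted DAG, meaning every internal (non-leaf) node has at least one child of in-degree at most 1. Then every node of N has a descendant leaf reachable by a tree path (a path all of whose arcs end in nodes of in-degree at most 1); in particular every node has a strict descendant leaf. -/
/-! Following tree children from `v` must stop at a leaf because `E` is acyclic. Every node
after `v` on such a tree path has in-degree one, so a walk from the root to the leaf, traced
backwards from the leaf, is forced to follow the tree path back up to `v`. -/

theorem List.IsChain.exists_mem_rel_of_mem {α : Type*} {R : α → α → Prop} {l : List α} {w : α}
    (hl : l.IsChain R) (hw : w ∈ l) (hhead : l.head? ≠ some w) : ∃ u ∈ l, R u w := by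
  obtain ⟨i, hi, rfl⟩ := List.getElem_of_mem hw
  obtain _ | j := i
  · exact absurd (by simp [List.head?_eq_getElem?]) hhead
  · exact ⟨l[j], List.getElem_mem _, hl.getElem j hi⟩

theorem wellFounded_flip_of_acyclic {V : Type*} [Finite V] {E : V → V → Prop}
    (hacyc : ∀ v, ¬ Relation.TransGen E v v) : WellFounded (flip E) :=
  have : IsTrans V (flip (Relation.TransGen E)) := ⟨fun _ _ _ h₁ h₂ => h₂.trans h₁⟩
  have : Std.Irrefl (flip (Relation.TransGen E)) := ⟨hacyc⟩
  (Finite.wellFounded_of_trans_of_irrefl (flip (Relation.TransGen E))).mono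
    fun _ _ h => Relation.TransGen.single h

section Walks

variable {V : Type*} {E : V → V → Prop}

theorem isWalk_singleton (v : V) : IsWalk E [v] v v :=
  ⟨List.isChain_singleton v, rfl, rfl⟩

theorem IsWalk.exists_eq_cons {p : List V} {u v : V} (hp : IsWalk E p u v) :
    ∃ t, p = u :: t := by
  obtain _ | ⟨a, t⟩ := p
  · simp [IsWalk] at hp
  · exact ⟨t, by simpa [IsWalk] using hp.2.1⟩

theorem isWalk_cons_cons_iff {t : List V} {u v w : V} :
    IsWalk E (u :: v :: t) u w ↔ E u v ∧ IsWalk E (v :: t) v w :=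
  ⟨fun ⟨hc, _, hl⟩ => ⟨(List.isChain_cons_cons.1 hc).1, (List.isChain_cons_cons.1 hc).2, rfl, hl⟩,
    fun ⟨huv, hc, _, hl⟩ => ⟨List.isChain_cons_cons.2 ⟨huv, hc⟩, rfl, hl⟩⟩

theorem IsWalk.cons {p : List V} {u v w : V} (huv : E u v) (hp : IsWalk E p v w) :
    IsWalk E (u :: p) u w := by
  obtain ⟨t, rfl⟩ := hp.exists_eq_cons
  exact isWalk_cons_cons_iff.2 ⟨huv, hp⟩

theorem IsWalk.end_mem {p : List V} {u v : V} (hp : IsWalk E p u v) : v ∈ p :=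
  List.mem_of_getLast? hp.2.2

end Walks

theorem not_rel_root {V : Type*} {E : V → V → Prop} {r : V}
    (hacyc : ∀ v, ¬ Relation.TransGen E v v) (hroot : ∀ v, Relation.ReflTransGen E r v) (x : V) :
    ¬ E x r :=
  fun h => hacyc r (Relation.TransGen.tail' (hroot x) h)

def IsTreeWalk {V : Type*} [Fintype V] (E : V → V → Prop) (p : List V) (u v : V) : Prop :=
  IsWalk E p u v ∧ ∀ x ∈ p.tail, inDeg E x ≤ 1

section

variable {V : Type*} [Fintype V] {E : V → V → Prop}

theorem exists_rel_of_outDeg_ne_zero {v : V} (h : outDeg E v ≠ 0) : ∃ w, E v w := by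
  simpa [outDeg, Finite.card_eq_zero_iff] using h

theorem eq_of_rel_of_inDeg_le_one {u u' w : V} (hw : inDeg E w ≤ 1) (hu : E u w) (hu' : E u' w) :
    u = u' :=
  congrArg Subtype.val ((Finite.card_le_one_iff_subsingleton.1 hw).elim ⟨u, hu⟩ ⟨u', hu'⟩)

theorem IsTreeWalk.cons {p : List V} {u v w : V} (huv : E u v) (hv : inDeg E v ≤ 1)
    (hp : IsTreeWalk E p v w) : IsTreeWalk E (u :: p) u w := by
  obtain ⟨t, rfl⟩ := hp.1.exists_eq_cons
  refine ⟨hp.1.cons huv, ?_⟩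
  simpa [hv] using hp.2

theorem exists_isTreeWalk_to_leaf (hwf : WellFounded (flip E))
    (htc : ∀ v, (∃ w, E v w) → ∃ w, E v w ∧ inDeg E w ≤ 1) (v : V) :
    ∃ lf p, outDeg E lf = 0 ∧ IsTreeWalk E p v lf := by
  induction v using hwf.induction with
  | _ v ih =>
  by_cases hleaf : outDeg E v = 0
  · exact ⟨v, [v], hleaf, isWalk_singleton v, by simp⟩
  obtain ⟨w, hvw, hw⟩ := htc v (exists_rel_of_outDeg_ne_zero hleaf)
  obtain ⟨lf, p, hlf, hp⟩ := ih w hvw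
  exact ⟨lf, v :: p, hlf, hp.cons hvw hw⟩

theorem IsTreeWalk.mem_of_isWalk {p q : List V} {r v lf : V} (hr : ∀ x, ¬ E x r)
    (hp : IsTreeWalk E p v lf) (hq : IsWalk E q r lf) : v ∈ q := by
  induction p generalizing v with
  | nil => simp [IsTreeWalk, IsWalk] at hp
  | cons u t ih =>
    obtain rfl : u = v := by simpa [IsWalk] using hp.1.2.1
    obtain _ | ⟨b, t⟩ := t
    · obtain rfl : u = lf := by simpa [IsWalk] using hp.1.2.2
      exact hq.end_mem
    obtain ⟨hub, hb⟩ := isWalk_cons_cons_iff.1 hp.1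
    have hbq : b ∈ q := ih ⟨hb, fun x hx => hp.2 x (List.mem_cons_of_mem _ hx)⟩
    have hbr : q.head? ≠ some b := by
      rw [hq.2.1]
      exact fun hrb => hr u (Option.some_inj.1 hrb ▸ hub)
    obtain ⟨w, hwq, hwb⟩ := hq.1.exists_mem_rel_of_mem hbq hbr
    rwa [← eq_of_rel_of_inDeg_le_one (hp.2 b List.mem_cons_self) hwb hub]

end

/-- In a tree-child rooted DAG (every non-leaf node has some child of in-degree at
most 1), every node has a descendant leaf reachable by a tree path; in particular
this leaf is a strict descendant of the node. -/
theorem stmt4 {V : Type*} [Fintype V] (E : V → V → Prop) (r : V)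
    (hacyc : ∀ v, ¬ Relation.TransGen E v v)
    (hroot : ∀ v, Relation.ReflTransGen E r v)
    (htc : ∀ v, (∃ w, E v w) → ∃ w, E v w ∧ inDeg E w ≤ 1) :
    ∀ v : V, ∃ (lf : V) (p : List V),
      outDeg E lf = 0 ∧ IsWalk E p v lf ∧ (∀ x ∈ p.tail, inDeg E x ≤ 1) ∧
      (∀ q : List V, IsWalk E q r lf → v ∈ q) := by
  intro v
  obtain ⟨lf, p, hlf, hp⟩ := exists_isTreeWalk_to_leaf (wellFounded_flip_of_acyclic hacyc) htc v
  exact ⟨lf, p, hlf, hp.1, hp.2, fun q hq => hp.mem_of_isWalk (not_rel_root hacyc hroot) hq⟩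
end

section
/- Let N be a rooted DAG in which every node has at most 2 parents. If i and j are two leaves such that every internal node whose cluster contains i also contains j and vice versa, then i and j are siblings (they share a common parent). -/
/-!
Choose a parent `p` of `i` that is lowest, i.e. no other parent of `i` lies strictly below it
(acyclicity and finiteness make such a choice possible). As `p` is internal and its cluster
contains `i`, it also contains `j`; let `c` be the first node after `p` on a path to `j`.
If `c ≠ j`, then `c` is internal and its cluster contains `j`, hence `i`, so some parent of `i`
lies below `c` and therefore strictly below `p`, a contradiction. Thus `c = j`.
-/

open Relation

section

variable {V : Type*} {E : V → V → Prop}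

theorem outDeg_eq_zero_iff [Fintype V] {v : V} : outDeg E v = 0 ↔ ∀ w, ¬ E v w := by
  rw [outDeg, Finite.card_eq_zero_iff, isEmpty_subtype]

theorem exists_pred_of_reflTransGen_of_ne {u v : V} (huv : ReflTransGen E u v) (hne : u ≠ v) :
    ∃ w, ReflTransGen E u w ∧ E w v :=
  huv.cases_tail.resolve_left (Ne.symm hne)

theorem exists_succ_of_reflTransGen_of_ne {u v : V} (huv : ReflTransGen E u v) (hne : u ≠ v) :
    ∃ w, E u w ∧ ReflTransGen E w v :=
  huv.cases_head.resolve_left hne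

theorem exists_mem_forall_not_transGen [Finite V] (hacyc : ∀ v, ¬ TransGen E v v) {s : Set V}
    (hs : s.Nonempty) : ∃ p ∈ s, ∀ q ∈ s, ¬ TransGen E p q := by
  have : IsTrans V (fun a b => TransGen E b a) := ⟨fun _ _ _ hab hbc => hbc.trans hab⟩
  have : Std.Irrefl (fun a b : V => TransGen E b a) := ⟨hacyc⟩
  exact (Finite.wellFounded_of_trans_of_irrefl _).has_min s hs

theorem edge_of_lowest_parent {i j p : V} (hi : ∀ w, ¬ E i w)
    (hji : ∀ v, (∃ w, E v w) → ReflTransGen E v j → ReflTransGen E v i)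
    (hpj : ReflTransGen E p j) (hpj_ne : p ≠ j) (hlow : ∀ q, E q i → ¬ TransGen E p q) :
    E p j := by
  obtain ⟨c, hpc, hcj⟩ := exists_succ_of_reflTransGen_of_ne hpj hpj_ne
  by_contra hnot
  have hcj_ne : c ≠ j := fun h => hnot (h ▸ hpc)
  obtain ⟨d, hcd, -⟩ := exists_succ_of_reflTransGen_of_ne hcj hcj_ne
  have hci : ReflTransGen E c i := hji c ⟨d, hcd⟩ hcj
  obtain ⟨q, hcq, hqi⟩ := exists_pred_of_reflTransGen_of_ne hci (fun h => hi d (h ▸ hcd))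
  exact hlow q hqi (TransGen.head' hpc hcq)

end

theorem stmt8_general {V : Type*} [Fintype V] (E : V → V → Prop) (r : V)
    (hacyc : ∀ v, ¬ Relation.TransGen E v v)
    (hroot : ∀ v, Relation.ReflTransGen E r v)
    (i j : V) (hij : i ≠ j)
    (hi : outDeg E i = 0) (hj : outDeg E j = 0)
    (hcl : ∀ v, (∃ w, E v w) → (i ∈ cluster E v ↔ j ∈ cluster E v)) :
    ∃ p, E p i ∧ E p j := by
  have hi' : ∀ w, ¬ E i w := outDeg_eq_zero_iff.mp hi
  have hj' : ∀ w, ¬ E j w := outDeg_eq_zero_iff.mp hj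
  have hr_ne : r ≠ i := by
    rintro rfl
    obtain ⟨w, hiw, -⟩ := exists_succ_of_reflTransGen_of_ne (hroot j) hij
    exact hi' w hiw
  obtain ⟨p0, -, hp0⟩ := exists_pred_of_reflTransGen_of_ne (hroot i) hr_ne
  obtain ⟨p, hp, hlow⟩ := exists_mem_forall_not_transGen hacyc (s := {p | E p i}) ⟨p0, hp0⟩
  have hpj : ReflTransGen E p j := ((hcl p ⟨i, hp⟩).mp ⟨hi, .single hp⟩).2
  have hji v hv hvj : ReflTransGen E v i := ((hcl v hv).mpr ⟨hj, hvj⟩).2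
  exact ⟨p, hp, edge_of_lowest_parent hi' hji hpj (fun h => hj' i (h ▸ hp)) hlow⟩

/-- In a rooted DAG in which every node has at most 2 parents, if `i` and `j` are
two leaves such that every internal node whose cluster contains one of them also
contains the other, then `i` and `j` are siblings. -/
theorem stmt8 {V : Type*} [Fintype V] (E : V → V → Prop) (r : V)
    (hacyc : ∀ v, ¬ Relation.TransGen E v v)
    (hroot : ∀ v, Relation.ReflTransGen E r v)
    (hdeg : ∀ v, inDeg E v ≤ 2)
    (i j : V) (hij : i ≠ j)
    (hi : outDeg E i = 0) (hj : outDeg E j = 0)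
    (hcl : ∀ v, (∃ w, E v w) → (i ∈ cluster E v ↔ j ∈ cluster E v)) :
    ∃ p, E p i ∧ E p j :=
  stmt8_general E r hacyc hroot i j hij hi hj hcl
end

section
/- Let N be a rooted DAG with root r. If a node v is a descendant of a node u but not a strict descendant (some path from r to v avoids u), then there exists a hybrid node h (in-degree ≥ 2) that is a strict ancestor of v and a reticulation cycle for h (two internally disjoint paths from a common origin x to h) in which u is an intermediate node of one of the two paths. -/
/-!
Take the walk `A` from `r` to `v` that avoids `u`. Its last vertex `a` that is an ancestor of `u`
and the first strict descendant `b` of `u` after it are joined along `A` by a corridor meeting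
neither set; with a walk `a ⇝ u ⇝ b` it forms a reticulation cycle with `u` inside a merge path.

If the hybrid end `h` of such a cycle does not dominate `v`, a walk from `r` to `v` avoiding `h`
leaves the region made of the ancestors of `u` and the two merge paths for the last time at some
`a` before its first vertex `b` strictly below `h`. Whether `a` is a strict ancestor of `u`, lies
on the merge path without `u`, or lies on the one with `u` at or after `u`, splicing the corridor
`a ⇝ b` in yields a new cycle through `u` whose hybrid end `b` is strictly below `h`. The graph
being finite and acyclic, this descent ends at a hybrid end that dominates `v`.
-/

open Relation

namespace List

variable {α : Type*} {P : α → Prop}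

theorem exists_eq_append_cons_of_first {l : List α} (h : ∃ y ∈ l, P y) :
    ∃ l₁ b l₂, l = l₁ ++ b :: l₂ ∧ P b ∧ ∀ y ∈ l₁, ¬ P y := by
  classical
  obtain ⟨b, hb⟩ := Option.isSome_iff_exists.mp (find?_isSome (p := fun y => decide (P y)).mpr
    (by simpa using h))
  obtain ⟨hPb, l₁, l₂, rfl, hl₁⟩ := find?_eq_some_iff_append.mp hb
  exact ⟨l₁, b, l₂, rfl, by simpa using hPb, fun y hy => by simpa using hl₁ y hy⟩

theorem exists_eq_append_cons_of_last {l : List α} (h : ∃ y ∈ l, P y) :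
    ∃ l₁ a l₂, l = l₁ ++ a :: l₂ ∧ P a ∧ ∀ y ∈ l₂, ¬ P y := by
  obtain ⟨m₁, a, m₂, hm, hPa, hm₁⟩ :=
    exists_eq_append_cons_of_first (l := l.reverse) (by simpa using h)
  refine ⟨m₂.reverse, a, m₁.reverse, ?_, hPa, fun y hy => hm₁ y (mem_reverse.mp hy)⟩
  simpa using congrArg reverse hm

end List

section Walk

variable {V : Type*} {E : V → V → Prop} {l l₁ l₂ : List V} {s t y : V}

theorem Relation.TransGen.ne_of_acyclic {a b : V} (hab : TransGen E a b)
    (hacyc : ∀ w, ¬ TransGen E w w) : a ≠ b := by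
  rintro rfl; exact hacyc a hab

theorem IsWalk.eq_cons (hl : IsWalk E l s t) : l = s :: l.tail := by
  obtain ⟨-, hs, -⟩ := hl
  cases l <;> simp_all

theorem IsWalk.head_mem (hl : IsWalk E l s t) : s ∈ l := by
  rw [hl.eq_cons]; exact List.mem_cons_self

theorem IsWalk.last_mem (hl : IsWalk E l s t) : t ∈ l :=
  List.mem_of_getLast? hl.2.2

theorem IsWalk.eq_singleton_or (hl : IsWalk E l s t) :
    (l = [s] ∧ s = t) ∨ l = s :: (internals l ++ [t]) := by
  have ht := hl.2.2
  rw [hl.eq_cons] at ht ⊢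
  rcases List.eq_nil_or_concat l.tail with h | ⟨m, b, h⟩
  · rw [h] at ht ⊢
    simp_all
  · rw [h, List.concat_eq_append, ← List.cons_append, List.getLast?_concat,
      Option.some_inj] at ht
    rw [List.concat_eq_append] at h
    simp [h, internals, ht]

theorem IsWalk.pairwise (hl : IsWalk E l s t) : l.Pairwise (TransGen E) :=
  List.IsChain.pairwise (hl.1.imp fun _ _ => TransGen.single)

theorem IsWalk.reflTransGen_s9 (hl : IsWalk E l s t) : ReflTransGen E s t := by
  rcases hl.eq_singleton_or with ⟨-, rfl⟩ | h
  · rfl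
  · have hne : l ≠ [] := by rw [h]; exact List.cons_ne_nil _ _
    have := List.relationReflTransGen_of_exists_isChain l hl.1 hne
    rwa [(List.head_eq_iff_head?_eq_some _).mpr hl.2.1,
      (List.getLast_eq_iff_getLast?_eq_some _).mpr hl.2.2] at this

theorem IsWalk.split (hl : IsWalk E (l₁ ++ y :: l₂) s t) :
    IsWalk E (l₁ ++ [y]) s y ∧ IsWalk E (y :: l₂) y t := by
  obtain ⟨hc, hs, ht⟩ := hl
  have hc := List.isChain_split.mp hc
  refine ⟨⟨hc.1, ?_, by simp⟩, ⟨hc.2, rfl, ?_⟩⟩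
  · cases l₁ <;> simp_all
  · rwa [List.getLast?_append_cons] at ht

theorem IsWalk.append_tail {a b c : V} (h₁ : IsWalk E l₁ a b)
    (h₂ : IsWalk E l₂ b c) : IsWalk E (l₁ ++ l₂.tail) a c := by
  obtain ⟨m, rfl⟩ : ∃ m, l₁ = m ++ [b] := by
    rcases h₁.eq_singleton_or with ⟨h, rfl⟩ | h
    · exact ⟨[], h⟩
    · exact ⟨a :: internals l₁, h⟩
  rw [h₂.eq_cons] at h₂
  refine ⟨by rw [List.append_assoc]; exact List.isChain_split.mpr ⟨h₁.1, h₂.1⟩, ?_, ?_⟩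
  · have := h₁.2.1
    cases m <;> simp_all
  · simpa [List.getLast?_append_cons] using h₂.2.2

theorem IsWalk.reflTransGen_of_mem (hl : IsWalk E l s t) (hy : y ∈ l) :
    ReflTransGen E s y ∧ ReflTransGen E y t := by
  obtain ⟨l₁, l₂, rfl⟩ := List.append_of_mem hy
  exact ⟨hl.split.1.reflTransGen_s9, hl.split.2.reflTransGen_s9⟩

theorem IsWalk.transGen_of_mem_tail (hl : IsWalk E l s t) (hy : y ∈ l.tail) :
    TransGen E s y := by
  have := hl.pairwise
  rw [hl.eq_cons, List.pairwise_cons] at this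
  exact this.1 y hy

theorem IsWalk.transGen_of_mem_internals (hl : IsWalk E l s t) (hy : y ∈ internals l) :
    TransGen E s y ∧ TransGen E y t := by
  rcases hl.eq_singleton_or with ⟨h, -⟩ | h
  · simp [h, internals] at hy
  · have := hl.pairwise
    rw [h, List.pairwise_cons, List.pairwise_append] at this
    exact ⟨this.1 y (by simp [hy]), this.2.2.2 y hy t (by simp)⟩

theorem mem_of_mem_internals (hy : y ∈ internals l) : y ∈ l :=
  List.mem_of_mem_tail (List.dropLast_subset _ hy)

theorem IsWalk.mem_internals (hl : IsWalk E l s t) (hy : y ∈ l) (hys : y ≠ s) (hyt : y ≠ t) :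
    y ∈ internals l := by
  rcases hl.eq_singleton_or with ⟨h, -⟩ | h
  · simp_all
  · rw [h] at hy
    simpa [hys, hyt] using hy

theorem IsWalk.rel_getLast_internals (hl : IsWalk E l s t) (hst : s ≠ t) :
    E ((s :: internals l).getLast (List.cons_ne_nil _ _)) t := by
  rcases hl.eq_singleton_or with ⟨-, h⟩ | h
  · exact absurd h hst
  · have hc := hl.1
    rw [h, ← List.cons_append] at hc
    exact (List.isChain_append.mp hc).2.2 _ (List.getLast?_eq_some_getLast _) _ rfl

theorem exists_isWalk_of_reflTransGen {a b : V} (h : ReflTransGen E a b) :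
    ∃ l, IsWalk E l a b := by
  obtain ⟨l, hc, hl⟩ := List.exists_isChain_cons_of_relationReflTransGen h
  exact ⟨a :: l, hc, rfl, by rw [List.getLast?_eq_some_getLast (List.cons_ne_nil _ _), hl]⟩

theorem IsWalk.exists_corridor {P Q : V → Prop} (hl : IsWalk E l s t) (hQs : Q s) (hPs : ¬ P s)
    (hPt : P t) : ∃ a b c, IsWalk E c a b ∧ (∀ y ∈ c, y ∈ l) ∧ Q a ∧ P b ∧
      ∀ y ∈ internals c, ¬ P y ∧ ¬ Q y := by
  obtain ⟨l₁, b, l₂, rfl, hPb, hl₁⟩ :=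
    List.exists_eq_append_cons_of_first ⟨t, hl.last_mem, hPt⟩
  have hs : s ∈ l₁ := by
    have := hl.eq_cons
    cases l₁ with
    | nil =>
      simp only [List.nil_append, List.cons.injEq] at this
      exact absurd (this.1 ▸ hPb) hPs
    | cons s' _ =>
      simp only [List.cons_append, List.cons.injEq] at this
      simp [this.1]
  obtain ⟨m₁, a, m₂, rfl, hQa, hm₂⟩ := List.exists_eq_append_cons_of_last ⟨s, hs, hQs⟩
  have hc : IsWalk E (a :: (m₂ ++ [b])) a b := by
    have := hl.split.1
    rw [List.append_assoc, List.cons_append] at this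
    exact this.split.2
  refine ⟨a, b, _, hc, fun y hy => ?_, hQa, hPb, fun y hy => ?_⟩
  · simp only [List.mem_cons, List.mem_append] at hy ⊢
    tauto
  · simp only [internals, List.tail_cons, List.dropLast_concat] at hy
    exact ⟨hl₁ y (by simp [hy]), hm₂ y hy⟩

end Walk

section Cycle

variable {V : Type*} {E : V → V → Prop} {u x h a b : V} {p q c w : List V}

theorem IsWalk.reroute (hacyc : ∀ w, ¬ TransGen E w w) {p₁ p₂ : List V}
    (hp : IsWalk E (p₁ ++ a :: p₂) x h) (hq : IsWalk E q x h)
    (hdisj : (internals (p₁ ++ a :: p₂)).Disjoint (internals q)) (hah : a ≠ h)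
    (hc : IsWalk E c a b) (hw : IsWalk E w h b)
    (hcint : ∀ y ∈ internals c, y ∉ q ∧ ¬ TransGen E h y) :
    IsWalk E (p₁ ++ c) x b ∧ (internals (p₁ ++ c)).Disjoint (internals (q ++ w.tail)) := by
  have hp' : IsWalk E (p₁ ++ c) x b := by
    have := hp.split.1.append_tail hc
    rwa [List.append_assoc, List.singleton_append, ← hc.eq_cons] at this
  refine ⟨hp', fun y hy₁ hy₂ => ?_⟩
  obtain ⟨hxy, hyb⟩ := hp'.transGen_of_mem_internals hy₁
  have hyq : y ∈ q ∨ TransGen E h y := by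
    rcases List.mem_append.mp (mem_of_mem_internals hy₂) with hyq | hyw
    · exact Or.inl hyq
    · exact Or.inr (hw.transGen_of_mem_tail hyw)
  by_cases hyc : y ∈ internals c
  · rcases hyq with hyq | hhy
    · exact (hcint y hyc).1 hyq
    · exact (hcint y hyc).2 hhy
  have hya : y ∈ p₁ ++ [a] := by
    rcases List.mem_append.mp (mem_of_mem_internals hy₁) with hyp | hyc'
    · exact List.mem_append_left _ hyp
    · by_cases hya : y = a
      · simp [hya]
      · exact absurd (hc.mem_internals hyc' hya (hyb.ne_of_acyclic hacyc)) hyc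
  have hyh : TransGen E y h := TransGen.trans_right (hp.split.1.reflTransGen_of_mem hya).2
    ((reflTransGen_iff_eq_or_transGen.mp hp.split.2.reflTransGen_s9).resolve_left hah.symm)
  have hyp : y ∈ p₁ ++ a :: p₂ := by
    simp only [List.mem_append, List.mem_cons] at hya ⊢
    tauto
  rcases hyq with hyq | hhy
  · have hyx := (hxy.ne_of_acyclic hacyc).symm
    exact hdisj (hp.mem_internals hyp hyx (hyh.ne_of_acyclic hacyc))
      (hq.mem_internals hyq hyx (hyh.ne_of_acyclic hacyc))
  · exact hacyc y (hyh.trans hhy)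

/-- `RetCycleAt` without `p ≠ q`, which follows from `u ∈ internals q`. -/
structure RetCycleThrough (E : V → V → Prop) (u x h : V) (p q : List V) : Prop where
  isWalk_left : IsWalk E p x h
  isWalk_right : IsWalk E q x h
  disjoint : (internals p).Disjoint (internals q)
  mem_internals_right : u ∈ internals q

namespace RetCycleThrough

theorem retCycleAt (hcyc : RetCycleThrough E u x h p q) : RetCycleAt E x h p q := by
  refine ⟨hcyc.isWalk_left, hcyc.isWalk_right, ?_, fun _ hp hq => hcyc.disjoint hp hq⟩
  rintro rfl
  exact hcyc.disjoint hcyc.mem_internals_right hcyc.mem_internals_right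

theorem two_le_inDeg [Fintype V] (hacyc : ∀ w, ¬ TransGen E w w)
    (hcyc : RetCycleThrough E u x h p q) : 2 ≤ inDeg E h := by
  obtain ⟨hxu, huh⟩ := hcyc.isWalk_right.transGen_of_mem_internals hcyc.mem_internals_right
  have hxh : x ≠ h := (hxu.trans huh).ne_of_acyclic hacyc
  have hq : internals q ≠ [] := List.ne_nil_of_mem hcyc.mem_internals_right
  obtain ⟨c, hch, hcp⟩ : ∃ c, E c h ∧ c ∈ x :: internals p :=
    ⟨_, hcyc.isWalk_left.rel_getLast_internals hxh, List.getLast_mem _⟩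
  obtain ⟨c', hc'h, hc'q⟩ : ∃ c', E c' h ∧ c' ∈ internals q := by
    have := hcyc.isWalk_right.rel_getLast_internals hxh
    rw [List.getLast_cons hq] at this
    exact ⟨_, this, List.getLast_mem hq⟩
  have hcc' : c ≠ c' := by
    rintro rfl
    rcases List.mem_cons.mp hcp with rfl | hcp
    · exact hacyc c (hcyc.isWalk_right.transGen_of_mem_internals hc'q).1
    · exact hcyc.disjoint hcp hc'q
  have : Nontrivial {w // E w h} :=
    ⟨⟨c, hch⟩, ⟨c', hc'h⟩, by simpa using hcc'⟩
  have := Finite.one_lt_card_iff_nontrivial.mpr this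
  unfold inDeg
  omega

theorem of_corridor (hacyc : ∀ w, ¬ TransGen E w w) {w₁ w₂ : List V} (hc : IsWalk E c a b)
    (hw₁ : IsWalk E w₁ a u) (hw₂ : IsWalk E w₂ u b) (hau : TransGen E a u)
    (hub : TransGen E u b)
    (hcint : ∀ y ∈ internals c, y ∉ w₁ ∧ y ∉ w₂) :
    RetCycleThrough E u a b c (w₁ ++ w₂.tail) where
  isWalk_left := hc
  isWalk_right := hw₁.append_tail hw₂
  disjoint y hyc hyq := by
    rcases List.mem_append.mp (mem_of_mem_internals hyq) with hyw | hyw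
    · exact (hcint y hyc).1 hyw
    · exact (hcint y hyc).2 (List.mem_of_mem_tail hyw)
  mem_internals_right := (hw₁.append_tail hw₂).mem_internals
    (List.mem_append_left _ hw₁.last_mem) (hau.ne_of_acyclic hacyc).symm (hub.ne_of_acyclic hacyc)

theorem exists_of_corridor_from_ancestor (hacyc : ∀ w, ¬ TransGen E w w)
    (hcyc : RetCycleThrough E u x h p q) (hc : IsWalk E c a b) (hau : TransGen E a u)
    (hw : IsWalk E w h b) (hhb : TransGen E h b)
    (hcint : ∀ y ∈ internals c, ¬ ReflTransGen E y u ∧ y ∉ q ∧ ¬ TransGen E h y) :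
    ∃ q', RetCycleThrough E u a b c q' := by
  obtain ⟨w₁, hw₁⟩ := exists_isWalk_of_reflTransGen hau.to_reflTransGen
  obtain ⟨q₁, q₂, hq⟩ := List.append_of_mem (mem_of_mem_internals hcyc.mem_internals_right)
  have hw₂ := (hq ▸ hcyc.isWalk_right).split.2.append_tail hw
  have huh := (hcyc.isWalk_right.transGen_of_mem_internals hcyc.mem_internals_right).2
  refine ⟨_, of_corridor hacyc hc hw₁ hw₂ hau (huh.trans hhb) fun y hy => ⟨?_, ?_⟩⟩
  · exact fun hyw => (hcint y hy).1 (hw₁.reflTransGen_of_mem hyw).2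
  · rintro hyw
    rcases List.mem_append.mp hyw with hyq | hyw
    · exact (hcint y hy).2.1 (hq ▸ List.mem_append_right q₁ hyq)
    · exact (hcint y hy).2.2 (hw.transGen_of_mem_tail hyw)

theorem reroute_left (hacyc : ∀ w, ¬ TransGen E w w) {p₁ p₂ : List V}
    (hcyc : RetCycleThrough E u x h (p₁ ++ a :: p₂) q) (hah : a ≠ h) (hc : IsWalk E c a b)
    (hw : IsWalk E w h b) (hhb : TransGen E h b)
    (hcint : ∀ y ∈ internals c, y ∉ q ∧ ¬ TransGen E h y) :
    RetCycleThrough E u x b (p₁ ++ c) (q ++ w.tail) := by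
  obtain ⟨hp', hdisj⟩ :=
    hcyc.isWalk_left.reroute hacyc hcyc.isWalk_right hcyc.disjoint hah hc hw hcint
  have hq' := hcyc.isWalk_right.append_tail hw
  obtain ⟨hxu, huh⟩ := hcyc.isWalk_right.transGen_of_mem_internals hcyc.mem_internals_right
  exact ⟨hp', hq', hdisj, hq'.mem_internals
    (List.mem_append_left _ (mem_of_mem_internals hcyc.mem_internals_right))
    (hxu.ne_of_acyclic hacyc).symm ((huh.trans hhb).ne_of_acyclic hacyc)⟩

theorem reroute_right (hacyc : ∀ w, ¬ TransGen E w w) {q₁ q₂ : List V}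
    (hcyc : RetCycleThrough E u x h p (q₁ ++ a :: q₂)) (hu : u ∈ q₁ ++ [a]) (hah : a ≠ h)
    (hc : IsWalk E c a b) (hw : IsWalk E w h b) (hhb : TransGen E h b)
    (hcint : ∀ y ∈ internals c, y ∉ p ∧ ¬ TransGen E h y) :
    RetCycleThrough E u x b (p ++ w.tail) (q₁ ++ c) := by
  obtain ⟨hq', hdisj⟩ :=
    hcyc.isWalk_right.reroute hacyc hcyc.isWalk_left hcyc.disjoint.symm hah hc hw hcint
  obtain ⟨hxu, huh⟩ := hcyc.isWalk_right.transGen_of_mem_internals hcyc.mem_internals_right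
  have hu' : u ∈ q₁ ++ c := by
    rcases List.mem_append.mp hu with hu | hu
    · exact List.mem_append_left _ hu
    · exact List.mem_append_right _ (List.eq_of_mem_singleton hu ▸ hc.head_mem)
  exact ⟨hcyc.isWalk_left.append_tail hw, hq', hdisj.symm, hq'.mem_internals hu'
    (hxu.ne_of_acyclic hacyc).symm ((huh.trans hhb).ne_of_acyclic hacyc)⟩

end RetCycleThrough

end Cycle

section Descent

variable {V : Type*} {E : V → V → Prop} {r u v x h : V} {p q C : List V}

theorem RetCycleThrough.exists_lower_of_avoiding (hacyc : ∀ w, ¬ TransGen E w w)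
    (hcyc : RetCycleThrough E u x h p q) (hru : ReflTransGen E r u) (hhv : ReflTransGen E h v)
    (hC : IsWalk E C r v) (hhC : h ∉ C) :
    ∃ b, TransGen E h b ∧ ReflTransGen E b v ∧
      ∃ x' p' q', RetCycleThrough E u x' b p' q' := by
  obtain ⟨hxu, huh⟩ := hcyc.isWalk_right.transGen_of_mem_internals hcyc.mem_internals_right
  have hrh : ¬ TransGen E h r := fun hhr =>
    hacyc h (hhr.trans_left (hru.trans huh.to_reflTransGen))
  have hhv' : TransGen E h v := (reflTransGen_iff_eq_or_transGen.mp hhv).resolve_left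
    fun hvh => hhC (hvh ▸ hC.last_mem)
  obtain ⟨a, b, c, hc, hcC, hQa, hhb, hcint⟩ :=
    hC.exists_corridor (P := TransGen E h)
      (Q := fun y => ReflTransGen E y u ∨ y ∈ p ∨ y ∈ q) (Or.inl hru) hrh hhv'
  have hah : a ≠ h := fun hah => hhC (hah ▸ hcC a hc.head_mem)
  obtain ⟨w, hw⟩ := exists_isWalk_of_reflTransGen hhb.to_reflTransGen
  refine ⟨b, hhb, (hC.reflTransGen_of_mem (hcC b hc.last_mem)).2, ?_⟩
  by_cases hau : TransGen E a u
  · exact ⟨a, c, hcyc.exists_of_corridor_from_ancestor hacyc hc hau hw hhb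
      fun y hy => ⟨fun hyu => (hcint y hy).2 (Or.inl hyu),
        fun hyq => (hcint y hy).2 (Or.inr (Or.inr hyq)), (hcint y hy).1⟩⟩
  have hapq : a ∈ p ∨ a ∈ q := by
    rcases hQa with hau' | hapq
    · rcases reflTransGen_iff_eq_or_transGen.mp hau' with rfl | hau'
      · exact Or.inr (mem_of_mem_internals hcyc.mem_internals_right)
      · exact absurd hau' hau
    · exact hapq
  rcases hapq with hap | haq
  · obtain ⟨p₁, p₂, rfl⟩ := List.append_of_mem hap
    exact ⟨x, _, _, hcyc.reroute_left hacyc hah hc hw hhb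
      fun y hy => ⟨fun hyq => (hcint y hy).2 (Or.inr (Or.inr hyq)), (hcint y hy).1⟩⟩
  · obtain ⟨q₁, q₂, rfl⟩ := List.append_of_mem haq
    have hu : u ∈ q₁ ++ [a] := by
      have hu := mem_of_mem_internals hcyc.mem_internals_right
      rw [List.mem_append, List.mem_cons] at hu
      rw [List.mem_append, List.mem_singleton]
      rcases hu with hu | hu | hu
      · exact Or.inl hu
      · exact Or.inr hu
      · exact absurd (hcyc.isWalk_right.split.2.transGen_of_mem_tail hu) hau
    exact ⟨x, _, _, hcyc.reroute_right hacyc hu hah hc hw hhb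
      fun y hy => ⟨fun hyp => (hcint y hy).2 (Or.inr (Or.inl hyp)), (hcint y hy).1⟩⟩

theorem exists_retCycleThrough_of_avoiding (hacyc : ∀ w, ¬ TransGen E w w) {A : List V}
    (hru : ReflTransGen E r u) (huv : ReflTransGen E u v) (hA : IsWalk E A r v) (huA : u ∉ A) :
    ∃ h x p q, RetCycleThrough E u x h p q ∧ ReflTransGen E h v := by
  have hur : ¬ TransGen E u r := fun hur => hacyc u (hur.trans_left hru)
  have huv' : TransGen E u v := (reflTransGen_iff_eq_or_transGen.mp huv).resolve_left
    fun hvu => huA (hvu ▸ hA.last_mem)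
  obtain ⟨a, b, c, hc, hcA, hau, hub, hcint⟩ :=
    hA.exists_corridor (P := TransGen E u) (Q := fun y => ReflTransGen E y u) hru hur huv'
  have hau : TransGen E a u := (reflTransGen_iff_eq_or_transGen.mp hau).resolve_left
    fun hua => huA (hua ▸ hcA a hc.head_mem)
  obtain ⟨w₁, hw₁⟩ := exists_isWalk_of_reflTransGen hau.to_reflTransGen
  obtain ⟨w₂, hw₂⟩ := exists_isWalk_of_reflTransGen hub.to_reflTransGen
  refine ⟨b, a, c, _, RetCycleThrough.of_corridor hacyc hc hw₁ hw₂ hau hub fun y hy =>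
    ⟨fun hyw => (hcint y hy).2 (hw₁.reflTransGen_of_mem hyw).2, fun hyw => ?_⟩,
    (hA.reflTransGen_of_mem (hcA b hc.last_mem)).2⟩
  rcases reflTransGen_iff_eq_or_transGen.mp (hw₂.reflTransGen_of_mem hyw).1 with rfl | huy
  · exact (hcint y hy).2 ReflTransGen.refl
  · exact (hcint y hy).1 huy

theorem exists_retCycleThrough_dominating [Finite V] (hacyc : ∀ w, ¬ TransGen E w w)
    (hroot : ∀ w, ReflTransGen E r w) (huv : ReflTransGen E u v) {A : List V}
    (hA : IsWalk E A r v) (huA : u ∉ A) :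
    ∃ h x p q, RetCycleThrough E u x h p q ∧ ∀ l, IsWalk E l r v → h ∈ l := by
  have : IsTrans V (fun a b => TransGen E b a) := ⟨fun _ _ _ hba hcb => hcb.trans hba⟩
  have : Std.Irrefl (fun a b => TransGen E b a) := ⟨hacyc⟩
  obtain ⟨h, ⟨hhv, x, p, q, hcyc⟩, hmin⟩ :=
    (Finite.wellFounded_of_trans_of_irrefl (fun a b => TransGen E b a)).has_min
      {h | ReflTransGen E h v ∧ ∃ x p q, RetCycleThrough E u x h p q}
      (by
        obtain ⟨h, x, p, q, hcyc, hhv⟩ :=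
          exists_retCycleThrough_of_avoiding hacyc (hroot u) huv hA huA
        exact ⟨h, hhv, x, p, q, hcyc⟩)
  refine ⟨h, x, p, q, hcyc, fun C hC => by_contra fun hhC => ?_⟩
  obtain ⟨b, hhb, hb⟩ := hcyc.exists_lower_of_avoiding hacyc (hroot u) hhv hC hhC
  exact hmin b hb hhb

end Descent

/-- In a rooted DAG, if `v` is a descendant of `u` but not a strict descendant,
then there is a hybrid node `h` which is a strict ancestor of `v` together with a
reticulation cycle for `h` in one of whose merge paths `u` is intermediate. -/
theorem stmt9 {V : Type*} [Fintype V] (E : V → V → Prop) (r : V)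
    (hacyc : ∀ v, ¬ Relation.TransGen E v v)
    (hroot : ∀ v, Relation.ReflTransGen E r v)
    (u v : V)
    (hdesc : Relation.ReflTransGen E u v)
    (hnonstrict : ∃ l : List V, IsWalk E l r v ∧ u ∉ l) :
    ∃ (h x : V) (p q : List V),
      2 ≤ inDeg E h ∧
      (∀ l : List V, IsWalk E l r v → h ∈ l) ∧
      RetCycleAt E x h p q ∧
      (u ∈ internals p ∨ u ∈ internals q) := by
  obtain ⟨A, hA, huA⟩ := hnonstrict
  obtain ⟨h, x, p, q, hcyc, hdom⟩ := exists_retCycleThrough_dominating hacyc hroot hdesc hA huA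
  exact ⟨h, x, p, q, hcyc.two_le_inDeg hacyc, hdom, hcyc.retCycleAt,
    Or.inr hcyc.mem_internals_right⟩
end

section
/- Let N be a 1-nested hybridization network, let h be a hybrid node with cluster {i}, let K be its reticulation cycle with split node u, and let x and y be intermediate nodes lying on different merge paths of K. Then C(x) ∩ C(y) = {i}. -/
/-!
A common descendant `l` of `x` and `y` is reached from `u` by two walks, one along `p` through `x`
and one along `q` through `y`; they leave `u` by different arcs. Cut both at the first vertex `w` of
the first walk that lies on the second: the two prefixes are internally disjoint merge paths of a
reticulation cycle at `u` whose hybrid `w` reaches `l`. This cycle shares with `K` the arc leaving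
`u` along `p`, so by 1-nestedness `w = h`, and `l ∈ C(h) = {i}`.
-/

namespace List

variable {α : Type*}

theorem exists_append_cons_first {P : α → Prop} {l : List α} (hex : ∃ v ∈ l, P v) :
    ∃ l₁ v l₂, l = l₁ ++ v :: l₂ ∧ P v ∧ ∀ z ∈ l₁, ¬ P z := by
  classical
  obtain ⟨v, hv⟩ := Option.isSome_iff_exists.mp
    (find?_isSome.mpr (by simpa using hex) : (l.find? (P ·)).isSome)
  obtain ⟨hPv, l₁, l₂, rfl, hmin⟩ := find?_eq_some_iff_append.mp hv
  exact ⟨l₁, v, l₂, rfl, by simpa using hPv, by simpa using hmin⟩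

theorem getLast_cons_eq_or_mem (u : α) (t : List α) :
    (u :: t).getLast (cons_ne_nil u t) = u ∧ t = [] ∨
      (u :: t).getLast (cons_ne_nil u t) ∈ t := by
  cases t with
  | nil => simp
  | cons b t => exact .inr (getLast_cons (a := u) (cons_ne_nil b t) ▸ getLast_mem _)

end List

section

variable {V : Type*} {E : V → V → Prop}

theorem mem_of_mem_internals_s12 {l : List V} {x : V} (hx : x ∈ internals l) : x ∈ l :=
  List.tail_subset l (List.dropLast_subset _ hx)

theorem cluster_subset_of_reflTransGen [Fintype V] {x v : V} (hxv : Relation.ReflTransGen E x v) :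
    cluster E v ⊆ cluster E x :=
  fun _ ⟨hleaf, hvl⟩ => ⟨hleaf, hxv.trans hvl⟩

theorem two_le_inDeg_of_ne [Fintype V] {a b w : V} (ha : E a w) (hb : E b w) (hab : a ≠ b) :
    2 ≤ inDeg E w :=
  Finite.one_lt_card_iff_nontrivial.mpr ⟨⟨a, ha⟩, ⟨b, hb⟩, by simpa using hab⟩

namespace IsWalk

theorem reflTransGen_of_mem_s12 {l : List V} {u v z : V} (hl : IsWalk E l u v) (hz : z ∈ l) :
    Relation.ReflTransGen E z v := by
  obtain ⟨hc, -, hv⟩ := hl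
  refine List.IsChain.backwards_induction (Relation.ReflTransGen E · v) l hc
    (fun _ _ hxy hy => .head hxy hy) (fun hne => ?_) z hz
  rw [List.getLast?_eq_some_getLast hne, Option.some.injEq] at hv
  exact hv ▸ .refl

theorem nodup (hacyc : ∀ v, ¬ Relation.TransGen E v v) {l : List V} {u v : V}
    (hl : IsWalk E l u v) : l.Nodup :=
  (hl.1.imp (S := Relation.TransGen E) fun _ _ => .single).pairwise.imp
    fun h heq => by subst heq; exact hacyc _ h

theorem exists_cons_cons_of_mem_internals {p : List V} {u h x w : V} (hp : IsWalk E p u h)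
    (hx : x ∈ internals p) (hxw : Relation.ReflTransGen E x w) :
    ∃ a t, IsWalk E (u :: a :: t) u w ∧ a ∈ internals p ∧ (u, a) ∈ arcsOf p := by
  obtain ⟨hc, hu, -⟩ := hp
  rcases p with _ | ⟨u', _ | ⟨a, _ | ⟨b, rest⟩⟩⟩ <;>
    simp only [internals, List.tail_nil, List.tail_cons, List.dropLast_nil,
      List.dropLast_singleton, List.dropLast_cons_cons, List.mem_cons, List.not_mem_nil,
      List.head?_cons, Option.some.injEq] at hx hu
  subst u'
  obtain ⟨d₁, d₂, hsplit⟩ := List.append_of_mem (List.mem_cons.mpr (hx.imp_right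
    fun hm => List.dropLast_subset _ hm))
  obtain ⟨s, hs, hsw⟩ := List.exists_isChain_cons_of_relationReflTransGen hxw
  have hchain : List.IsChain E (u :: (d₁ ++ x :: s)) :=
    List.isChain_cons_split.mpr ⟨(List.isChain_cons_split.mp (hsplit ▸ hc)).1, hs⟩
  obtain ⟨t, ht⟩ : ∃ t, d₁ ++ x :: s = a :: t := by
    cases d₁ <;> simp_all
  refine ⟨a, t, ⟨ht ▸ hchain, rfl, ?_⟩, by simp [internals], by simp [arcsOf]⟩
  rw [← ht, ← hsw]
  simp [List.getLast?_eq_some_getLast]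

end IsWalk

theorem exists_retCycleAt_of_isWalk_cons_cons [Fintype V] (hacyc : ∀ v, ¬ Relation.TransGen E v v)
    {u a b w : V} {F G : List V} (hF : IsWalk E (u :: a :: F) u w)
    (hG : IsWalk E (u :: b :: G) u w) (hab : a ≠ b) :
    ∃ w' P Q, RetCycleAt E u w' P Q ∧ 2 ≤ inDeg E w' ∧ Relation.ReflTransGen E w' w ∧
      (u, a) ∈ arcsOf P := by
  have huF := (List.nodup_cons.mp (hF.nodup hacyc)).1
  have huG := (List.nodup_cons.mp (hG.nodup hacyc)).1
  have hwF : w ∈ a :: F := List.mem_of_getLast? (List.getLast?_cons_cons ▸ hF.2.2)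
  have hwG : w ∈ b :: G := List.mem_of_getLast? (List.getLast?_cons_cons ▸ hG.2.2)
  -- `w'` is the first vertex of the first walk that lies on the second one
  obtain ⟨t₁, w', t₂, hFsplit, hw'G, hfirst⟩ :=
    List.exists_append_cons_first (P := (· ∈ b :: G)) ⟨w, hwF, hwG⟩
  obtain ⟨s₁, s₂, hGsplit⟩ := List.append_of_mem hw'G
  have hPc : List.IsChain E (u :: (t₁ ++ [w'])) :=
    (List.isChain_cons_split.mp (hFsplit ▸ hF.1)).1
  have hQc : List.IsChain E (u :: (s₁ ++ [w'])) :=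
    (List.isChain_cons_split.mp (hGsplit ▸ hG.1)).1
  -- `α` and `β` are the predecessors of `w'` on the two new merge paths
  have hα := List.getLast_cons_eq_or_mem u t₁
  have hβ := List.getLast_cons_eq_or_mem u s₁
  set α := (u :: t₁).getLast (List.cons_ne_nil u t₁)
  set β := (u :: s₁).getLast (List.cons_ne_nil u s₁)
  have hαβ : α ≠ β := by
    rcases hα with ⟨hα, rfl⟩ | hα <;> rcases hβ with ⟨hβ, rfl⟩ | hβ
    · simp only [List.nil_append, List.cons.injEq] at hFsplit hGsplit
      exact fun _ => hab (hFsplit.1.trans hGsplit.1.symm)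
    · exact fun h => huG (hGsplit ▸ List.mem_append_left _ (hα ▸ h ▸ hβ))
    · exact fun h => huF (hFsplit ▸ List.mem_append_left _ (hβ ▸ h ▸ hα))
    · exact fun h => hfirst α hα (hGsplit ▸ List.mem_append_left _ (h ▸ hβ))
  refine ⟨w', u :: (t₁ ++ [w']), u :: (s₁ ++ [w']),
    ⟨⟨hPc, rfl, List.getLast?_concat (l := u :: t₁)⟩, ⟨hQc, rfl, List.getLast?_concat (l := u :: s₁)⟩,
      ?_, ?_⟩,
    two_le_inDeg_of_ne ?_ ?_ hαβ, hF.reflTransGen_of_mem_s12 (by simp [hFsplit]), ?_⟩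
  · intro hPQ
    simp only [List.cons.injEq, List.append_cancel_right_eq, true_and] at hPQ
    subst hPQ
    exact hαβ rfl
  · simpa [internals] using fun z hz hzs => hfirst z hz (hGsplit ▸ List.mem_append_left _ hzs)
  · exact (List.cons_append ▸ hPc : List.IsChain E ((u :: t₁) ++ [w'])).rel_getLast_head_of_append
      (List.cons_ne_nil _ _) (List.cons_ne_nil _ _)
  · exact (List.cons_append ▸ hQc : List.IsChain E ((u :: s₁) ++ [w'])).rel_getLast_head_of_append
      (List.cons_ne_nil _ _) (List.cons_ne_nil _ _)
  · cases t₁ <;> simp_all [arcsOf]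

theorem RetCycleAt.reflTransGen_of_reflTransGen_of_mem_internals [Fintype V]
    (hacyc : ∀ v, ¬ Relation.TransGen E v v) (hnested : OneNested E) {u h x y l : V}
    {p q : List V} (hhyb : 2 ≤ inDeg E h) (hK : RetCycleAt E u h p q) (hx : x ∈ internals p)
    (hy : y ∈ internals q) (hxl : Relation.ReflTransGen E x l)
    (hyl : Relation.ReflTransGen E y l) : Relation.ReflTransGen E h l := by
  obtain ⟨a, F, hF, ha, hua⟩ := hK.1.exists_cons_cons_of_mem_internals hx hxl
  obtain ⟨b, G, hG, hb, -⟩ := hK.2.1.exists_cons_cons_of_mem_internals hy hyl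
  obtain ⟨w, P, Q, hC, hw, hwl, huaP⟩ :=
    exists_retCycleAt_of_isWalk_cons_cons hacyc hF hG fun hab => hK.2.2.2 a ha (hab ▸ hb)
  have hhw : h = w := by
    by_contra hne
    exact hnested u h p q u w P Q hhyb hw hK hC (fun hsame => hne hsame.2.1) (u, a)
      (List.mem_append_left _ hua) (List.mem_append_left _ huaP)
  exact hhw ▸ hwl

end

theorem stmt12_general {V : Type*} [Fintype V] (E : V → V → Prop)
    (hacyc : ∀ v, ¬ Relation.TransGen E v v)
    (hnested : OneNested E)
    (u h i : V) (p q : List V)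
    (hhyb : 2 ≤ inDeg E h)
    (hK : RetCycleAt E u h p q)
    (hcl : cluster E h = {i})
    (x y : V) (hx : x ∈ internals p) (hy : y ∈ internals q) :
    cluster E x ∩ cluster E y = {i} := by
  rw [← hcl]
  refine Set.Subset.antisymm (fun l ⟨⟨hleaf, hxl⟩, _, hyl⟩ =>
    ⟨hleaf, hK.reflTransGen_of_reflTransGen_of_mem_internals hacyc hnested hhyb hx hy hxl hyl⟩) ?_
  exact Set.subset_inter
    (cluster_subset_of_reflTransGen (hK.1.reflTransGen_of_mem_s12 (mem_of_mem_internals_s12 hx)))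
    (cluster_subset_of_reflTransGen (hK.2.1.reflTransGen_of_mem_s12 (mem_of_mem_internals_s12 hy)))

/-- In a 1-nested hybridization network, if `h` is a hybrid node with cluster
`{i}` and `x`, `y` are intermediate nodes in different merge paths of its
reticulation cycle, then the intersection of their clusters is `{i}`. -/
theorem stmt12 {V : Type*} [Fintype V] (E : V → V → Prop) (r : V)
    (hacyc : ∀ v, ¬ Relation.TransGen E v v)
    (hroot : ∀ v, Relation.ReflTransGen E r v)
    (hin2 : ∀ v, inDeg E v ≤ 2)
    (hnod1 : ∀ v, inDeg E v ≤ 1 → outDeg E v ≠ 1)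
    (hnested : OneNested E)
    (u h i : V) (p q : List V)
    (hhyb : 2 ≤ inDeg E h)
    (hK : RetCycleAt E u h p q)
    (hcl : cluster E h = {i})
    (x y : V) (hx : x ∈ internals p) (hy : y ∈ internals q) :
    cluster E x ∩ cluster E y = {i} :=
  stmt12_general E hacyc hnested u h i p q hhyb hK hcl x y hx hy
end

section
/- Let N be a semibinary 1-nested network on leaf set S (hybrid nodes have in-degree 2 and out-degree 1) and let i, j be two distinct leaves. Then i and j are siblings if and only if ℓ_N(i,j) = ℓ_N(j,i) = 1, where ℓ_N(i,j) is the length of a shortest path from the unique lowest common ancestor of i and j to i. -/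
/-- `x` is a common ancestor of `u` and `v`. -/
def CommonAnc {V : Type*} (E : V → V → Prop) (x u v : V) : Prop :=
  Relation.ReflTransGen E x u ∧ Relation.ReflTransGen E x v

/-- `x` is a lowest common ancestor of `u` and `v`: a common ancestor that is not a
proper ancestor of any other common ancestor. -/
def IsLCA {V : Type*} (E : V → V → Prop) (x u v : V) : Prop :=
  CommonAnc E x u v ∧ ∀ y, CommonAnc E y u v → y ≠ x → ¬ Relation.TransGen E x y

/-- There is a directed path of length `k` from `x` to `y`. -/
def HasPathLen {V : Type*} (E : V → V → Prop) (x y : V) (k : ℕ) : Prop :=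
  ∃ l : List V, IsWalk E l x y ∧ l.length = k + 1

/-- The length of a shortest directed path from `x` to `y` is `k`. -/
def ShortestLen {V : Type*} (E : V → V → Prop) (x y : V) (k : ℕ) : Prop :=
  HasPathLen E x y k ∧ ∀ m, HasPathLen E x y m → k ≤ m

/-!
If `i` and `j` have a common parent `p`, then the lowest common ancestor `x` lies above `i`
and, as `x ≠ i`, above the parent of `i`; a leaf has at most one parent in a semibinary network,
so that parent is `p`, and minimality of `x` forces `x = p`. Conversely, shortest paths of
length one from `x` make `x` a common parent.
-/

section Paths

variable {V : Type*} (E : V → V → Prop)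

theorem hasPathLen_zero_iff {x y : V} : HasPathLen E x y 0 ↔ x = y := by
  constructor
  · rintro ⟨l, ⟨-, hhead, hlast⟩, hlen⟩
    obtain ⟨a, rfl⟩ := List.length_eq_one_iff.1 hlen
    simp only [List.head?_cons, List.getLast?_singleton, Option.some.injEq] at hhead hlast
    exact hhead ▸ hlast
  · rintro rfl
    exact ⟨[x], ⟨List.isChain_singleton x, rfl, rfl⟩, rfl⟩

theorem hasPathLen_one_iff {x y : V} : HasPathLen E x y 1 ↔ E x y := by
  constructor
  · rintro ⟨l, ⟨hchain, hhead, hlast⟩, hlen⟩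
    obtain ⟨a, b, rfl⟩ := List.length_eq_two.1 hlen
    simp only [List.head?_cons, List.getLast?_cons_cons, List.getLast?_singleton,
      Option.some.injEq] at hhead hlast
    exact hhead ▸ hlast ▸ List.isChain_pair.1 hchain
  · intro hxy
    exact ⟨[x, y], ⟨List.isChain_pair.2 hxy, rfl, rfl⟩, rfl⟩

theorem shortestLen_one_iff {x y : V} : ShortestLen E x y 1 ↔ E x y ∧ x ≠ y := by
  refine ⟨fun h => ⟨(hasPathLen_one_iff E).1 h.1, fun hxy => ?_⟩, fun ⟨hxy, hne⟩ => ?_⟩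
  · exact absurd (h.2 0 ((hasPathLen_zero_iff E).2 hxy)) (by omega)
  · refine ⟨(hasPathLen_one_iff E).2 hxy, fun m hm => ?_⟩
    rcases m with _ | m
    · exact absurd ((hasPathLen_zero_iff E).1 hm) hne
    · omega

theorem IsLCA.eq_of_reflTransGen {x y u v : V} (hx : IsLCA E x u v) (hy : CommonAnc E y u v)
    (hxy : Relation.ReflTransGen E x y) : x = y := by
  by_contra hne
  exact hx.2 y hy (Ne.symm hne)
    ((Relation.reflTransGen_iff_eq_or_transGen.1 hxy).resolve_left (Ne.symm hne))

theorem reflTransGen_of_reflTransGen_of_forall_adj_eq {x v p : V} (hparent : ∀ q, E q v → q = p)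
    (hxv : Relation.ReflTransGen E x v) (hne : x ≠ v) : Relation.ReflTransGen E x p := by
  rcases Relation.ReflTransGen.cases_tail hxv with h | ⟨q, hxq, hqv⟩
  · exact absurd h.symm hne
  · exact hparent q hqv ▸ hxq

end Paths

section Degrees

variable {V : Type*} [Fintype V] (E : V → V → Prop)

theorem not_adj_of_outDeg_eq_zero {v : V} (hv : outDeg E v = 0) (w : V) : ¬ E v w :=
  fun hvw => by
    have : Nonempty {w // E v w} := ⟨⟨w, hvw⟩⟩
    exact Nat.card_pos.ne' hv

theorem eq_of_reflTransGen_of_outDeg_eq_zero {v z : V} (hv : outDeg E v = 0)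
    (hvz : Relation.ReflTransGen E v z) : z = v := by
  rcases Relation.ReflTransGen.cases_head hvz with h | ⟨w, hvw, -⟩
  · exact h.symm
  · exact absurd hvw (not_adj_of_outDeg_eq_zero E hv w)

theorem eq_of_adj_of_adj_of_inDeg_le_one {v p q : V} (hv : inDeg E v ≤ 1) (hp : E p v)
    (hq : E q v) : p = q := by
  have := Finite.card_le_one_iff_subsingleton.1 hv
  exact congrArg Subtype.val (Subsingleton.elim (⟨p, hp⟩ : {u // E u v}) ⟨q, hq⟩)

theorem inDeg_le_one_of_outDeg_eq_zero {v : V} (hin2 : inDeg E v ≤ 2)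
    (hhybout : inDeg E v = 2 → outDeg E v = 1) (hv : outDeg E v = 0) : inDeg E v ≤ 1 := by
  by_contra h
  have := hhybout (by omega)
  omega

end Degrees

theorem stmt16_general {V : Type*} [Fintype V] (E : V → V → Prop)
    (hin2 : ∀ v, inDeg E v ≤ 2)
    (hhybout : ∀ v, inDeg E v = 2 → outDeg E v = 1)
    (i j : V) (hij : i ≠ j)
    (hi : outDeg E i = 0) (hj : outDeg E j = 0)
    (x : V) (hx : IsLCA E x i j) :
    (∃ p, E p i ∧ E p j) ↔ (ShortestLen E x i 1 ∧ ShortestLen E x j 1) := by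
  have parent_ne {p v : V} (hv : outDeg E v = 0) (hpv : E p v) : p ≠ v :=
    fun h => not_adj_of_outDeg_eq_zero E hv v (h ▸ hpv)
  constructor
  · rintro ⟨p, hpi, hpj⟩
    have hxi : x ≠ i := fun h =>
      hij (eq_of_reflTransGen_of_outDeg_eq_zero E hi (h ▸ hx.1.2)).symm
    have hparent : ∀ q, E q i → q = p := fun q hqi =>
      eq_of_adj_of_adj_of_inDeg_le_one E
        (inDeg_le_one_of_outDeg_eq_zero E (hin2 i) (hhybout i) hi) hqi hpi
    have hxp : x = p := hx.eq_of_reflTransGen E ⟨.single hpi, .single hpj⟩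
      (reflTransGen_of_reflTransGen_of_forall_adj_eq E hparent hx.1.1 hxi)
    subst hxp
    exact ⟨(shortestLen_one_iff E).2 ⟨hpi, parent_ne hi hpi⟩,
      (shortestLen_one_iff E).2 ⟨hpj, parent_ne hj hpj⟩⟩
  · rintro ⟨hxi, hxj⟩
    exact ⟨x, ((shortestLen_one_iff E).1 hxi).1, ((shortestLen_one_iff E).1 hxj).1⟩

/-- In a semibinary 1-nested network, two distinct leaves `i` and `j` are siblings
if and only if the shortest paths from their (unique) lowest common ancestor to each
of them both have length 1, i.e. ℓ(i,j) = ℓ(j,i) = 1. -/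
theorem stmt16 {V : Type*} [Fintype V] (E : V → V → Prop) (r : V)
    (hacyc : ∀ v, ¬ Relation.TransGen E v v)
    (hroot : ∀ v, Relation.ReflTransGen E r v)
    (hin2 : ∀ v, inDeg E v ≤ 2)
    (hhybout : ∀ v, inDeg E v = 2 → outDeg E v = 1)
    (htreeout : ∀ v, inDeg E v ≤ 1 → (∃ w, E v w) → 2 ≤ outDeg E v)
    (hnested : OneNested E)
    (i j : V) (hij : i ≠ j)
    (hi : outDeg E i = 0) (hj : outDeg E j = 0)
    (x : V) (hx : IsLCA E x i j) :
    (∃ p, E p i ∧ E p j) ↔ (ShortestLen E x i 1 ∧ ShortestLen E x j 1) :=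
  stmt16_general E hin2 hhybout i j hij hi hj x hx
end
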